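/- arXiv:1512.07177 — 5 statements merged into one kernel-verified Lean document; each statement's English description precedes it below -/
import Mathlib

section
/- If F is a family of k-element subsets of [n] with ν(F) = s, then s·|∂F| ≥ |F|, where ∂F := { G : G is a (k−1)-element subset of [n] and G ⊂ F for some F ∈ F } is the shadow of F. -/
/-!
Shifting: an `(i, j)`-compression with `i < j` keeps `|F|`, does not increase `|∂F|`
(the UV-compression lemma of Kruskal–Katona), and does not increase `ν(F)`: a matching of the
compressed family has at most one member outside `F`, and swapping `i` and `j` in all members
then gives a matching of `F`. So `F` may be assumed shifted.

For shifted `F ⊆ C([n], k)` induct on `n`. For `k = 1`, `F` is itself a matching. If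
`n < (s + 1) k`, the local LYM inequality `|F| k ≤ |∂F| (n - k + 1)` already gives
`|F| ≤ s |∂F|`.
Otherwise split `F` at its largest element `n - 1` into the sets avoiding it and the link of it.
Both parts are shifted families on `[n - 1]`, their shadows inject disjointly into `∂F`, and the
link still has `ν ≤ s`: since `n ≥ (s + 1) k`, any `s + 1` disjoint members of the link can be
enlarged by distinct unused elements of `[n]`, which by shiftedness gives `s + 1` disjoint
members of `F`.
-/

open Finset
open scoped FinsetFamily

namespace Frankl

variable {α β : Type*}

def MatchingNumberLE (F : Finset (Finset α)) (s : ℕ) : Prop :=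
  ∀ M ⊆ F, (M : Set (Finset α)).PairwiseDisjoint id → #M ≤ s

namespace MatchingNumberLE

variable {F G : Finset (Finset α)} {s : ℕ}

lemma mono (hν : MatchingNumberLE F s) (hGF : G ⊆ F) : MatchingNumberLE G s :=
  fun M hM => hν M (hM.trans hGF)

lemma card_le_of_map_mem [DecidableEq β] {H : Finset (Finset β)} (hν : MatchingNumberLE H s)
    (f : α ↪ β) {M : Finset (Finset α)} (hM : (M : Set (Finset α)).PairwiseDisjoint id)
    (hMH : ∀ C ∈ M, C.map f ∈ H) : #M ≤ s := by
  have hinj : Function.Injective (map f) := map_injective f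
  rw [← card_image_of_injective M hinj]
  refine hν _ (image_subset_iff.2 hMH) ?_
  rw [coe_image, hinj.injOn.pairwiseDisjoint_image]
  exact fun C hC D hD hCD => (disjoint_map f).2 (hM hC hD hCD)

end MatchingNumberLE

lemma pairwiseDisjoint_of_sized {F : Finset (Finset α)} {k : ℕ}
    (hF : (F : Set (Finset α)).Sized k) (hk : k ≤ 1) :
    (F : Set (Finset α)).PairwiseDisjoint id := by
  intro A hA B hB hAB
  interval_cases k
  · show Disjoint A B
    rw [card_eq_zero.1 (hF hA)]
    exact disjoint_empty_left B
  · obtain ⟨a, rfl⟩ := card_eq_one.1 (hF hA)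
    obtain ⟨b, rfl⟩ := card_eq_one.1 (hF hB)
    exact disjoint_singleton.2 fun h => hAB (h ▸ rfl)

def Shifted (F : Finset (Finset ℕ)) : Prop :=
  ∀ A ∈ F, ∀ j ∈ A, ∀ i < j, i ∉ A → insert i (A.erase j) ∈ F

variable [DecidableEq α]

section Compression

open UV

lemma map_swap_of_mem_of_notMem {i j : α} {C : Finset α} (hi : i ∈ C) (hj : j ∉ C) :
    C.map (Equiv.swap i j).toEmbedding = (C ⊔ {j}) \ {i} := by
  ext x
  rw [mem_map_equiv, Equiv.symm_swap]
  by_cases hxi : x = i <;> by_cases hxj : x = j <;> simp_all [Equiv.swap_apply_of_ne_of_ne]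

lemma map_swap_of_notMem_of_notMem {i j : α} {C : Finset α} (hi : i ∉ C) (hj : j ∉ C) :
    C.map (Equiv.swap i j).toEmbedding = C := by
  ext x
  rw [mem_map_equiv, Equiv.symm_swap]
  by_cases hxi : x = i <;> by_cases hxj : x = j <;> simp_all [Equiv.swap_apply_of_ne_of_ne]

lemma MatchingNumberLE.compression {F : Finset (Finset α)} {s : ℕ} {i j : α}
    (hν : MatchingNumberLE F s) : MatchingNumberLE (𝓒 {i} {j} F) s := by
  intro M hM hMd
  by_cases hMF : M ⊆ F
  · exact hν M hMF hMd
  obtain ⟨B, hBM, hBF⟩ := not_subset.1 hMF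
  have hiB : i ∈ B := by simpa using le_of_mem_compression_of_notMem (hM hBM) hBF
  have hjB : j ∉ B := by simpa using disjoint_of_mem_compression_of_notMem (hM hBM) hBF
  refine hν.card_le_of_map_mem (Equiv.swap i j).toEmbedding hMd fun C hC => ?_
  obtain rfl | hCB := eq_or_ne C B
  · rw [map_swap_of_mem_of_notMem hiB hjB]
    exact sup_sdiff_mem_of_mem_compression_of_notMem (hM hC) hBF
  have hiC : i ∉ C := fun hiC => disjoint_left.1 (hMd hC hBM hCB) hiC hiB
  by_cases hjC : j ∈ C
  · rw [Equiv.swap_comm, map_swap_of_mem_of_notMem hjC hiC]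
    exact sup_sdiff_mem_of_mem_compression (hM hC) (by simpa) (by simpa)
  · rw [map_swap_of_notMem_of_notMem hiC hjC]
    by_contra hCF
    exact hiC (by simpa using le_of_mem_compression_of_notMem (hM hC) hCF)

lemma compress_singleton_singleton {i j : α} (hij : i ≠ j) (A : Finset α) :
    compress {i} {j} A = if i ∉ A ∧ j ∈ A then insert i (A.erase j) else A := by
  unfold compress
  simp only [disjoint_singleton_left, singleton_subset_iff]
  split_ifs with h
  · ext x
    by_cases hxi : x = i <;> by_cases hxj : x = j <;> simp_all
  · rfl

lemma sum_compression_lt_sum {u v : Finset α} {F : Finset (Finset α)} {w : Finset α → ℕ}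
    (hw : ∀ A ∈ F, compress u v A ≠ A → w (compress u v A) < w A) (hF : 𝓒 u v F ≠ F) :
    ∑ A ∈ 𝓒 u v F, w A < ∑ A ∈ F, w A := by
  rw [compression] at hF ⊢
  have hmoved : ({A ∈ F | compress u v A ∉ F}).Nonempty := by
    contrapose! hF
    rw [filter_image, hF, image_empty, union_empty, filter_true_of_mem]
    intro A hA
    by_contra h
    exact notMem_empty A (hF ▸ mem_filter.2 ⟨hA, h⟩)
  rw [sum_union compress_disjoint, ← sum_filter_add_sum_filter_not F (compress u v · ∈ F),
    add_lt_add_iff_left, filter_image, sum_image compress_injOn]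
  refine sum_lt_sum_of_nonempty hmoved fun A hA => ?_
  rw [mem_filter] at hA
  exact hw A hA.1 fun h => hA.2 (by rw [h]; exact hA.1)

lemma sum_sum_compression_lt_sum_sum {F : Finset (Finset ℕ)} {A : Finset ℕ} {i j : ℕ}
    (hij : i < j) (hA : A ∈ F) (hj : j ∈ A) (hi : i ∉ A) (hAF : insert i (A.erase j) ∉ F) :
    ∑ B ∈ 𝓒 {i} {j} F, ∑ b ∈ B, b < ∑ B ∈ F, ∑ b ∈ B, b := by
  refine sum_compression_lt_sum (fun B _ hB => ?_) fun hF => hAF ?_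
  · rw [compress_singleton_singleton hij.ne] at hB ⊢
    split_ifs at hB ⊢ with h
    · rw [sum_insert fun h' => h.1 (mem_of_mem_erase h'), ← sum_erase_add _ _ h.2]
      omega
    · exact absurd rfl hB
  · have := compress_mem_compression (u := {i}) (v := {j}) hA
    rwa [hF, compress_singleton_singleton hij.ne, if_pos ⟨hi, hj⟩] at this

lemma compression_subset_powersetCard {F : Finset (Finset ℕ)} {n k i j : ℕ} (hij : i < j)
    (hF : F ⊆ (range n).powersetCard k) : 𝓒 {i} {j} F ⊆ (range n).powersetCard k := by
  intro B hB
  obtain ⟨hBF, -⟩ | ⟨-, A, hA, rfl⟩ := mem_compression.1 hB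
  · exact hF hBF
  obtain ⟨hAn, hAk⟩ := mem_powersetCard.1 (hF hA)
  refine mem_powersetCard.2 ⟨?_, (card_compress (by simp) A).trans hAk⟩
  rw [compress_singleton_singleton hij.ne]
  split_ifs with h
  · exact insert_subset (mem_range.2 (hij.trans (mem_range.1 (hAn h.2))))
      ((erase_subset _ _).trans hAn)
  · exact hAn

theorem exists_shifted {F : Finset (Finset ℕ)} {n k s : ℕ} (hF : F ⊆ (range n).powersetCard k)
    (hν : MatchingNumberLE F s) :
    ∃ G ⊆ (range n).powersetCard k, Shifted G ∧ #G = #F ∧ #(∂ G) ≤ #(∂ F) ∧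
      MatchingNumberLE G s := by
  induction hw : ∑ A ∈ F, ∑ a ∈ A, a using Nat.strong_induction_on generalizing F with
  | _ w ih =>
  by_cases hsh : Shifted F
  · exact ⟨F, hF, hsh, rfl, le_rfl, hν⟩
  obtain ⟨A, hA, j, hj, i, hij, hiA, hAF⟩ :
      ∃ A ∈ F, ∃ j ∈ A, ∃ i < j, i ∉ A ∧ insert i (A.erase j) ∉ F := by
    simpa [Shifted] using hsh
  obtain ⟨G, hG, hGsh, hGF, hGshadow, hGν⟩ :=
    ih _ (hw ▸ sum_sum_compression_lt_sum_sum hij hA hj hiA hAF)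
      (compression_subset_powersetCard hij hF) hν.compression rfl
  refine ⟨G, hG, hGsh, hGF.trans (card_compression _ _ _), hGshadow.trans ?_, hGν⟩
  refine card_shadow_compression_le _ _ fun x hx => ⟨j, mem_singleton_self j, ?_⟩
  rw [mem_singleton.1 hx, erase_singleton, erase_singleton]
  exact isCompressed_self _ _

end Compression

lemma card_mul_le_card_shadow_mul_of_subset_powersetCard {X : Finset α} {F : Finset (Finset α)}
    {k : ℕ} (hF : F ⊆ X.powersetCard k) : #F * k ≤ #(∂ F) * (#X - k + 1) := by
  refine card_mul_le_card_mul' (· ⊆ ·) (fun A hA => ?_) (fun G hG => ?_)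
  · rw [← (mem_powersetCard.1 (hF hA)).2, ← card_image_of_injOn A.erase_injOn]
    refine card_le_card fun G hG => ?_
    obtain ⟨a, ha, rfl⟩ := mem_image.1 hG
    exact (mem_bipartiteBelow _).2 ⟨erase_mem_shadow hA ha, erase_subset _ _⟩
  obtain ⟨A, hA, a, ha, rfl⟩ := mem_shadow_iff.1 hG
  obtain ⟨hAX, hAk⟩ := mem_powersetCard.1 (hF hA)
  have hA0 := card_pos.2 ⟨a, ha⟩
  calc #(F.bipartiteAbove (· ⊆ ·) (A.erase a))
      ≤ #((X \ A.erase a).image fun b => insert b (A.erase a)) := by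
        refine card_le_card fun B hB => ?_
        obtain ⟨hBF, hAB⟩ := (mem_bipartiteAbove _).1 hB
        obtain ⟨hBX, hBk⟩ := mem_powersetCard.1 (hF hBF)
        obtain ⟨b, hb, rfl⟩ : ∃ b ∉ A.erase a, insert b (A.erase a) = B := by
          refine exists_eq_insert_iff.2 ⟨hAB, ?_⟩
          rw [card_erase_of_mem ha, hAk, hBk]
          omega
        exact mem_image_of_mem _ (mem_sdiff.2 ⟨hBX (mem_insert_self _ _), hb⟩)
    _ ≤ #(X \ A.erase a) := card_image_le
    _ = #X - k + 1 := by
        rw [card_sdiff_of_subset ((erase_subset _ _).trans hAX), card_erase_of_mem ha, hAk]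
        have := card_le_card hAX
        omega

lemma card_le_mul_card_shadow_of_card_lt {X : Finset α} {F : Finset (Finset α)} {k s : ℕ}
    (hF : F ⊆ X.powersetCard k) (hX : #X < (s + 1) * k) : #F ≤ s * #(∂ F) := by
  obtain rfl | ⟨A, hA⟩ := F.eq_empty_or_nonempty
  · simp
  have hkX : k ≤ #X := by
    obtain ⟨hAX, hAk⟩ := mem_powersetCard.1 (hF hA)
    exact hAk ▸ card_le_card hAX
  have hk : 0 < k := Nat.pos_of_ne_zero fun h => by simp [h] at hX
  refine Nat.le_of_mul_le_mul_right ?_ hk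
  calc #F * k ≤ #(∂ F) * (#X - k + 1) := card_mul_le_card_shadow_mul_of_subset_powersetCard hF
    _ ≤ #(∂ F) * (s * k) := Nat.mul_le_mul_left _ (by rw [Nat.succ_mul] at hX; omega)
    _ = s * #(∂ F) * k := by ring

lemma MatchingNumberLE.card_le_mul_card_shadow_of_sized_one {F : Finset (Finset α)} {s : ℕ}
    (hν : MatchingNumberLE F s) (hF : (F : Set (Finset α)).Sized 1) : #F ≤ s * #(∂ F) := by
  obtain rfl | ⟨A, hA⟩ := F.eq_empty_or_nonempty
  · simp
  have hshadow : 0 < #(∂ F) := by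
    obtain ⟨a, rfl⟩ := card_eq_one.1 (hF hA)
    exact card_pos.2 ⟨_, erase_mem_shadow hA (mem_singleton_self a)⟩
  calc #F ≤ s := hν F Subset.rfl (pairwiseDisjoint_of_sized hF le_rfl)
    _ ≤ s * #(∂ F) := Nat.le_mul_of_pos_right s hshadow

lemma card_shadow_nonMemberSubfamily_add_card_shadow_memberSubfamily_le (a : α)
    (F : Finset (Finset α)) :
    #(∂ (F.nonMemberSubfamily a)) + #(∂ (F.memberSubfamily a)) ≤ #(∂ F) := by
  rw [← card_memberSubfamily_add_card_nonMemberSubfamily a (∂ F), add_comm]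
  refine add_le_add (card_le_card fun G hG => ?_) (card_le_card fun G hG => ?_)
  · obtain ⟨b, hbG, hbF⟩ := mem_shadow_iff_insert_mem.1 hG
    simp only [mem_memberSubfamily, mem_shadow_iff_insert_mem] at hbF ⊢
    refine ⟨⟨b, ?_, by rw [insert_comm b a]; exact hbF.1⟩,
      fun h => hbF.2 (mem_insert_of_mem h)⟩
    simp only [mem_insert, not_or]
    exact ⟨fun h => hbF.2 (h ▸ mem_insert_self _ _), hbG⟩
  · obtain ⟨b, hbG, hbF⟩ := mem_shadow_iff_insert_mem.1 hG
    rw [mem_nonMemberSubfamily] at hbF ⊢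
    exact ⟨mem_shadow_iff_insert_mem.2 ⟨b, hbG, hbF.1⟩,
      fun h => hbF.2 (mem_insert_of_mem h)⟩

lemma exists_pairwiseDisjoint_insert {M : Finset (Finset α)} {W : Finset α}
    (hM : (M : Set (Finset α)).PairwiseDisjoint id) (hW : ∀ w ∈ W, ∀ G ∈ M, w ∉ G)
    (hMW : #M ≤ #W) :
    ∃ N : Finset (Finset α), (N : Set (Finset α)).PairwiseDisjoint id ∧ #N = #M ∧
      ∀ B ∈ N, ∃ G ∈ M, ∃ w ∈ W, B = insert w G := by
  induction M using Finset.induction_on generalizing W with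
  | empty => exact ⟨∅, by simp, rfl, by simp⟩
  | insert G M hGM ih =>
    rw [card_insert_of_notMem hGM] at hMW
    obtain ⟨w, hw⟩ : W.Nonempty := card_pos.1 (by omega)
    obtain ⟨N, hN, hNM, hNmem⟩ := ih (hM.subset (by simp))
      (fun v hv H hH => hW v (mem_of_mem_erase hv) H (mem_insert_of_mem hH))
      (by rw [card_erase_of_mem hw]; omega)
    have hdisj : ∀ B ∈ N, Disjoint (insert w G) B := by
      intro B hB
      obtain ⟨H, hH, v, hv, rfl⟩ := hNmem B hB
      have hGH : Disjoint G H :=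
        hM (mem_insert_self G M) (mem_insert_of_mem hH) fun h => hGM (h ▸ hH)
      simp only [disjoint_insert_left, disjoint_insert_right, mem_insert, not_or]
      exact ⟨⟨ne_of_mem_erase hv, hW v (mem_of_mem_erase hv) G (mem_insert_self G M)⟩,
        hW w hw H (mem_insert_of_mem hH), hGH⟩
    have hwN : insert w G ∉ N := fun h => insert_ne_empty w G (disjoint_self.1 (hdisj _ h))
    refine ⟨insert (insert w G) N, ?_, ?_, ?_⟩
    · rw [coe_insert]
      exact hN.insert fun B hB _ => hdisj B hB
    · rw [card_insert_of_notMem hwN, card_insert_of_notMem hGM, hNM]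
    · intro B hB
      obtain rfl | hB := mem_insert.1 hB
      · exact ⟨G, mem_insert_self G M, w, hw, rfl⟩
      · obtain ⟨H, hH, v, hv, rfl⟩ := hNmem B hB
        exact ⟨H, mem_insert_of_mem hH, v, mem_of_mem_erase hv, rfl⟩

namespace Shifted

variable {F : Finset (Finset ℕ)} {a : ℕ}

lemma insert_mem_of_mem_memberSubfamily (hF : Shifted F) {G : Finset ℕ}
    (hG : G ∈ F.memberSubfamily a) {b : ℕ} (hba : b ≤ a) (hbG : b ∉ G) :
    insert b G ∈ F := by
  rw [mem_memberSubfamily] at hG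
  obtain rfl | hba := hba.eq_or_lt
  · exact hG.1
  have := hF _ hG.1 a (mem_insert_self a G) b hba (by simp [hba.ne, hbG])
  rwa [erase_insert hG.2] at this

lemma nonMemberSubfamily (hF : Shifted F) (ha : ∀ A ∈ F, ∀ b ∈ A, b ≤ a) :
    Shifted (F.nonMemberSubfamily a) := by
  intro A hA j hj i hij hiA
  rw [mem_nonMemberSubfamily] at hA ⊢
  have hia : i ≠ a := (hij.trans_le (ha A hA.1 j hj)).ne
  exact ⟨hF A hA.1 j hj i hij hiA, by simp [hia.symm, hA.2]⟩

lemma memberSubfamily (hF : Shifted F) (ha : ∀ A ∈ F, ∀ b ∈ A, b ≤ a) :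
    Shifted (F.memberSubfamily a) := by
  intro G hG j hj i hij hiG
  rw [mem_memberSubfamily] at hG ⊢
  have hja : j ≠ a := fun h => hG.2 (h ▸ hj)
  have hia : i < a := hij.trans_le (ha _ hG.1 j (mem_insert_of_mem hj))
  have := hF _ hG.1 j (mem_insert_of_mem hj) i hij (by simp [hia.ne, hiG])
  rw [erase_insert_of_ne (Ne.symm hja), insert_comm] at this
  exact ⟨this, by simp [hia.ne', hG.2]⟩

end Shifted

lemma nonMemberSubfamily_subset_powersetCard {F : Finset (Finset ℕ)} {n k : ℕ}
    (hF : F ⊆ (range (n + 1)).powersetCard k) :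
    F.nonMemberSubfamily n ⊆ (range n).powersetCard k := by
  intro A hA
  rw [mem_nonMemberSubfamily] at hA
  obtain ⟨hAn, hAk⟩ := mem_powersetCard.1 (hF hA.1)
  rw [range_add_one] at hAn
  exact mem_powersetCard.2 ⟨(subset_insert_iff_of_notMem hA.2).1 hAn, hAk⟩

lemma memberSubfamily_subset_powersetCard {F : Finset (Finset ℕ)} {n k : ℕ}
    (hF : F ⊆ (range (n + 1)).powersetCard (k + 1)) :
    F.memberSubfamily n ⊆ (range n).powersetCard k := by
  intro G hG
  rw [mem_memberSubfamily] at hG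
  obtain ⟨hGn, hGk⟩ := mem_powersetCard.1 (hF hG.1)
  rw [range_add_one, insert_subset_insert_iff hG.2] at hGn
  exact mem_powersetCard.2 ⟨hGn, by rwa [card_insert_of_notMem hG.2, add_left_inj] at hGk⟩

lemma MatchingNumberLE.memberSubfamily {F : Finset (Finset ℕ)} {n k s : ℕ}
    (hν : MatchingNumberLE F s) (hsh : Shifted F)
    (hF : F ⊆ (range (n + 1)).powersetCard (k + 1)) (hn : (s + 1) * (k + 1) ≤ n + 1) :
    MatchingNumberLE (F.memberSubfamily n) s := by
  intro M hML hM
  by_contra! hsM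
  obtain ⟨M', hM'M, hM'⟩ := exists_subset_card_eq (n := s + 1) hsM
  have hL : ∀ G ∈ M', G ⊆ range n ∧ #G = k := fun G hG =>
    mem_powersetCard.1 (memberSubfamily_subset_powersetCard hF (hML (hM'M hG)))
  set U := M'.biUnion id
  have hU : #U ≤ (s + 1) * k := by
    rw [← hM']
    exact card_biUnion_le_card_mul _ _ _ fun G hG => (hL G hG).2.le
  have hUn : U ⊆ range (n + 1) := fun b hb => by
    obtain ⟨G, hG, hbG⟩ := mem_biUnion.1 hb
    exact mem_range.2 (Nat.lt_succ_of_lt (mem_range.1 ((hL G hG).1 hbG)))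
  obtain ⟨N, hN, hNM', hNmem⟩ := exists_pairwiseDisjoint_insert (W := range (n + 1) \ U)
    (hM.subset (by exact_mod_cast hM'M))
    (fun w hw G hG hwG => (mem_sdiff.1 hw).2 (mem_biUnion.2 ⟨G, hG, hwG⟩))
    (by rw [card_sdiff_of_subset hUn, card_range, hM']; rw [Nat.mul_succ] at hn; omega)
  have hNF : N ⊆ F := fun B hB => by
    obtain ⟨G, hG, w, hw, rfl⟩ := hNmem B hB
    obtain ⟨hwn, hwU⟩ := mem_sdiff.1 hw
    exact hsh.insert_mem_of_mem_memberSubfamily (hML (hM'M hG))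
      (Nat.lt_succ_iff.1 (mem_range.1 hwn)) fun hwG => hwU (mem_biUnion.2 ⟨G, hG, hwG⟩)
  have := hν N hNF hN
  omega

theorem card_le_mul_card_shadow_of_shifted {F : Finset (Finset ℕ)} {n k s : ℕ} (hk : k ≠ 0)
    (hF : F ⊆ (range n).powersetCard k) (hsh : Shifted F) (hν : MatchingNumberLE F s) :
    #F ≤ s * #(∂ F) := by
  induction n generalizing k F with
  | zero =>
    rw [powersetCard_eq_empty.2 (by rw [card_range]; omega), subset_empty] at hF
    simp [hF]
  | succ n ih =>
  obtain rfl | ⟨k, rfl⟩ : k = 1 ∨ ∃ k', k = k' + 1 + 1 := by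
    rcases k with _ | _ | k <;> simp_all
  · exact hν.card_le_mul_card_shadow_of_sized_one
      ((Set.sized_powersetCard _ _).mono (coe_subset.2 hF))
  by_cases hsmall : n + 1 < (s + 1) * (k + 1 + 1)
  · exact card_le_mul_card_shadow_of_card_lt hF (by rwa [card_range])
  have hbound : ∀ A ∈ F, ∀ b ∈ A, b ≤ n := fun A hA b hb =>
    Nat.lt_succ_iff.1 (mem_range.1 ((mem_powersetCard.1 (hF hA)).1 hb))
  have hD := ih (k := k + 1 + 1) (F := F.nonMemberSubfamily n) (by omega)
    (nonMemberSubfamily_subset_powersetCard hF) (hsh.nonMemberSubfamily hbound)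
    (hν.mono (filter_subset _ _))
  have hL := ih (k := k + 1) (F := F.memberSubfamily n) (by omega)
    (memberSubfamily_subset_powersetCard hF) (hsh.memberSubfamily hbound)
    (hν.memberSubfamily hsh hF (by omega))
  calc #F = #(F.nonMemberSubfamily n) + #(F.memberSubfamily n) := by
        rw [add_comm, card_memberSubfamily_add_card_nonMemberSubfamily]
    _ ≤ s * #(∂ (F.nonMemberSubfamily n)) + s * #(∂ (F.memberSubfamily n)) := add_le_add hD hL
    _ ≤ s * #(∂ F) := by
        rw [← mul_add]
        exact Nat.mul_le_mul_left s
          (card_shadow_nonMemberSubfamily_add_card_shadow_memberSubfamily_le n F)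

lemma filter_powersetCard_exists_superset_eq_shadow {X : Finset α} {F : Finset (Finset α)}
    {k : ℕ} (hF : F ⊆ X.powersetCard (k + 1)) :
    {G ∈ X.powersetCard k | ∃ A ∈ F, G ⊆ A} = ∂ F := by
  ext G
  rw [mem_filter, mem_powersetCard, mem_shadow_iff_exists_mem_card_add_one]
  constructor
  · rintro ⟨⟨-, hGk⟩, A, hA, hGA⟩
    exact ⟨A, hA, hGA, by rw [(mem_powersetCard.1 (hF hA)).2, hGk]⟩
  · rintro ⟨A, hA, hGA, hAG⟩
    obtain ⟨hAX, hAk⟩ := mem_powersetCard.1 (hF hA)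
    exact ⟨⟨hGA.trans hAX, by omega⟩, A, hA, hGA⟩

end Frankl

theorem stmt_4_general (n k s : ℕ)
    (F : Finset (Finset ℕ)) (hF : F ⊆ (Finset.range n).powersetCard k)
    (hmax : ∀ M ⊆ F, (M : Set (Finset ℕ)).PairwiseDisjoint id → M.card ≤ s) :
    F.card ≤ s * (((Finset.range n).powersetCard (k - 1)).filter
      fun G => ∃ f ∈ F, G ⊆ f).card := by
  have hν : Frankl.MatchingNumberLE F s := hmax
  rcases k with _ | k
  -- `k - 1` truncates to `0`, so the right side counts `{∅}`, whereas `∂ {∅} = ∅`.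
  · obtain rfl | ⟨A, hA⟩ := F.eq_empty_or_nonempty
    · simp
    have hFs : #F ≤ s := hν F Subset.rfl
      (Frankl.pairwiseDisjoint_of_sized
        ((Set.sized_powersetCard _ _).mono (coe_subset.2 hF)) zero_le_one)
    refine hFs.trans (Nat.le_mul_of_pos_right s (card_pos.2 ⟨∅, ?_⟩))
    exact mem_filter.2 ⟨by simp, A, hA, empty_subset A⟩
  rw [Nat.add_sub_cancel, Frankl.filter_powersetCard_exists_superset_eq_shadow hF]
  obtain ⟨G, hG, hGsh, hGF, hGshadow, hGν⟩ := Frankl.exists_shifted hF hν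
  calc #F = #G := hGF.symm
    _ ≤ s * #(∂ G) := Frankl.card_le_mul_card_shadow_of_shifted k.succ_ne_zero hG hGsh hGν
    _ ≤ s * #(∂ F) := Nat.mul_le_mul_left s hGshadow

/-- Theorem 2.1 (Frankl): if `F ⊆ C([n],k)` has maximum matching size exactly `s`, then
`s·|∂F| ≥ |F|`, where `∂F` is the family of `(k-1)`-subsets of `[n]` contained in some member
of `F`. -/
theorem stmt_4 (n k s : ℕ)
    (F : Finset (Finset ℕ)) (hF : F ⊆ (Finset.range n).powersetCard k)
    (hmatch : ∃ M ⊆ F, (M : Set (Finset ℕ)).PairwiseDisjoint id ∧ M.card = s)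
    (hmax : ∀ M ⊆ F, (M : Set (Finset ℕ)).PairwiseDisjoint id → M.card ≤ s) :
    F.card ≤ s * (((Finset.range n).powersetCard (k - 1)).filter
      fun G => ∃ f ∈ F, G ⊆ f).card :=
  stmt_4_general n k s F hF hmax
end

section
/- Let β ∈ (0,1) be a real number, let ℓ, s be positive integers, let Y be a finite set, and let F₁, F₂, …, F_{s+1} be families of ℓ-element subsets of Y that are nested and cross-dependent. Suppose there is an integer t with |Y| ≥ t·ℓ and t ≥ β(2s+1). Then |F₁| + |F₂| + … + |F_s| + (s+1)·|F_{s+1}| ≤ (s/β)·C(|Y|, ℓ). -/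
/-!
Put `u = min t (2s+1)` and average over the ordered choices of `u` pairwise disjoint `ℓ`-subsets
`A₀, …, A_{u-1}` of `Y`, encoded as embeddings `Fin u × Fin ℓ ↪ Y`. Every `ℓ`-set occurs as the
`j`-th block equally often, so on average `#{j | A_j ∈ F_k} = u |F_k| / C(|Y|, ℓ)`. For a single
choice the index sets `P_k = {j | A_j ∈ F_k}` are nested and, by cross-dependence, admit no system
of distinct representatives; by Hall's theorem some `k` (counted from `0`) has `|P_k| + k ≤ s`,
and this bounds `|P_0| + … + |P_{s-1}| + (s+1)|P_s|` by `s(2s+1)`. Averaging gives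
`u (|F₁| + … + |F_s| + (s+1)|F_{s+1}|) ≤ s(2s+1) C(|Y|, ℓ)`, and `u ≥ β(2s+1)`.
-/

open Finset Function
open scoped Pointwise

def CrossDependent {ι α : Type*} (F : ι → Finset (Finset α)) : Prop :=
  ¬ ∃ f : ι → Finset α, (∀ i, f i ∈ F i) ∧ Pairwise (Disjoint on f)

theorem exists_injective_mem_of_le_card_add {ι : Type*} [DecidableEq ι] {m : ℕ}
    {P : Fin m → Finset ι} (hP : ∀ k, m ≤ #(P k) + k) :
    ∃ g : Fin m → ι, Injective g ∧ ∀ k, g k ∈ P k := by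
  refine (all_card_le_biUnion_card_iff_exists_injective P).1 fun S => ?_
  rcases S.eq_empty_or_nonempty with rfl | hS
  · simp
  calc #S ≤ #(Ici (S.min' hS)) := card_le_card fun i hi => mem_Ici.2 (S.min'_le i hi)
    _ = m - S.min' hS := Fin.card_Ici _
    _ ≤ #(P (S.min' hS)) := by have := hP (S.min' hS); omega
    _ ≤ #(S.biUnion P) := card_le_card (subset_biUnion_of_mem P (S.min'_mem hS))

theorem card_mul_card_filter_mem_of_card_fiber_eq {Ω β : Type*} [Fintype Ω] [DecidableEq β]
    (f : Ω → β) {S G : Finset β} (hf : ∀ ω, f ω ∈ S)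
    (hfiber : ∀ a ∈ S, ∀ b ∈ S, #{ω | f ω = a} = #{ω | f ω = b}) (hG : G ⊆ S) :
    #S * #{ω | f ω ∈ G} = #G * Fintype.card Ω := by
  have hS : ∀ a ∈ S, #S * #{ω | f ω = a} = Fintype.card Ω := fun a ha => by
    calc #S * #{ω | f ω = a} = ∑ b ∈ S, #{ω | f ω = b} := by
          rw [← smul_eq_mul, ← sum_const]
          exact sum_congr rfl fun b hb => hfiber a ha b hb
      _ = Fintype.card Ω := by
          rw [sum_card_fiberwise_eq_card_filter, filter_true_of_mem fun ω _ => hf ω, card_univ]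
  rw [← sum_card_fiberwise_eq_card_filter, mul_sum, sum_congr rfl fun a ha => hS a (hG ha),
    sum_const, smul_eq_mul]

def weightedCard {β : Type*} {s : ℕ} (P : Fin (s + 1) → Finset β) : ℕ :=
  ∑ i : Fin s, #(P i.castSucc) + (s + 1) * #(P (Fin.last s))

theorem mul_sum_weightedCard_eq {ι β γ : Type*} {s a b : ℕ} (T : Finset ι)
    (P : ι → Fin (s + 1) → Finset β) (F : Fin (s + 1) → Finset γ)
    (h : ∀ k, a * ∑ x ∈ T, #(P x k) = b * #(F k)) :
    a * ∑ x ∈ T, weightedCard (P x) = b * weightedCard F := by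
  calc a * ∑ x ∈ T, weightedCard (P x)
      = ∑ i : Fin s, a * ∑ x ∈ T, #(P x i.castSucc)
          + (s + 1) * (a * ∑ x ∈ T, #(P x (Fin.last s))) := by
        simp only [weightedCard, sum_add_distrib, mul_add, mul_sum, sum_comm (s := T),
          mul_left_comm a]
    _ = b * weightedCard F := by
        simp only [h, weightedCard, mul_add, mul_sum]
        ring

theorem weightedCard_le {u s : ℕ} {P : Fin (s + 1) → Finset (Fin u)} (hP : Antitone P)
    (hu : u ≤ 2 * s + 1) {k : Fin (s + 1)} (hk : #(P k) + k ≤ s) :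
    weightedCard P ≤ s * (2 * s + 1) := by
  have hks : (k : ℕ) ≤ s := Fin.is_le k
  have hhead : ∑ i : Fin s, #(P i.castSucc) ≤ ∑ i : Fin s, if (i : ℕ) < k then u else #(P k) :=
    sum_le_sum fun i _ => by
      split_ifs with hi
      · exact card_le_univ _ |>.trans_eq (Fintype.card_fin u)
      · exact card_le_card (hP (Fin.le_def.2 (by simpa using hi)))
  have hcompl : #{i : Fin s | ¬(i : ℕ) < k} = s - k := by
    rw [filter_not, card_sdiff_of_subset (filter_subset _ _), Fin.card_filter_val_lt, card_univ,
      Fintype.card_fin, min_eq_right hks]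
  rw [sum_ite, sum_const, sum_const, Fin.card_filter_val_lt, hcompl, min_eq_right hks,
    smul_eq_mul, smul_eq_mul] at hhead
  have hlast : #(P (Fin.last s)) ≤ #(P k) := card_le_card (hP (Fin.le_last k))
  have hku : k * u ≤ k * (2 * s + 1) := Nat.mul_le_mul_left _ hu
  -- `k (2s+1) + (2s+1-k)(s-k) = s (2s+1) - k (s-k)`
  have hsplit : k * u + (s - k) * #(P k) + (s + 1) * #(P k) ≤ s * (2 * s + 1) := by
    generalize #(P k) = c at hk
    generalize (k : ℕ) = k at hks hk hku
    zify [hks] at hk hku ⊢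
    nlinarith
  unfold weightedCard
  nlinarith

section Blocks

variable {α : Type*} {u ℓ : ℕ}

def block (φ : Fin u × Fin ℓ ↪ α) (j : Fin u) : Finset α := ({j} ×ˢ univ).map φ

theorem card_block (φ : Fin u × Fin ℓ ↪ α) (j : Fin u) : #(block φ j) = ℓ := by
  simp [block]

theorem disjoint_block (φ : Fin u × Fin ℓ ↪ α) {j j' : Fin u} (h : j ≠ j') :
    Disjoint (block φ j) (block φ j') := by
  rw [block, block, disjoint_map, disjoint_product]
  exact .inl (disjoint_singleton.2 h)

variable [DecidableEq α]

theorem block_trans (φ : Fin u × Fin ℓ ↪ α) (σ : Equiv.Perm α) (j : Fin u) :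
    block (φ.trans σ.toEmbedding) j = σ • block φ j := by
  rw [block, block, ← map_map, smul_finset_def, map_eq_image]
  rfl

theorem weightedCard_filter_block_mem_le {s : ℕ} {F : Fin (s + 1) → Finset (Finset α)}
    (hF : Antitone F) (hcross : CrossDependent F) (hu : u ≤ 2 * s + 1)
    (φ : Fin u × Fin ℓ ↪ α) :
    weightedCard (fun k => ({j | block φ j ∈ F k} : Finset (Fin u))) ≤ s * (2 * s + 1) := by
  have hP : Antitone fun k => ({j | block φ j ∈ F k} : Finset (Fin u)) :=
    fun _ _ hkk' => monotone_filter_right _ fun _ _ hj => hF hkk' hj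
  obtain ⟨k, hk⟩ : ∃ k : Fin (s + 1), #{j | block φ j ∈ F k} + k ≤ s := by
    by_contra! h
    obtain ⟨g, hg, hgF⟩ := exists_injective_mem_of_le_card_add h
    exact hcross ⟨fun i => block φ (g i), fun i => (mem_filter.1 (hgF i)).2,
      fun i i' hii' => disjoint_block φ (hg.ne hii')⟩
  exact weightedCard_le hP hu hk

variable [Fintype α]

theorem card_filter_block_eq_of_card_eq (j : Fin u) {A B : Finset α}
    (hA : #A = ℓ) (hB : #B = ℓ) :
    #{φ : Fin u × Fin ℓ ↪ α | block φ j = A} = #{φ : Fin u × Fin ℓ ↪ α | block φ j = B} := by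
  have := Set.powersetCard.isPretransitive (α := α) (n := ℓ)
  obtain ⟨σ, hσ⟩ := MulAction.exists_smul_eq (Equiv.Perm α)
    (⟨A, hA⟩ : Set.powersetCard α ℓ) ⟨B, hB⟩
  have hσB : σ • A = B := congrArg Subtype.val hσ
  refine card_equiv (Equiv.embeddingCongr (Equiv.refl _) σ) fun φ => ?_
  simp only [mem_filter, mem_univ, true_and]
  rw [← hσB]
  show _ ↔ block (φ.trans σ.toEmbedding) j = σ • A
  rw [block_trans, smul_left_cancel_iff]

theorem choose_mul_sum_card_filter_block_mem {G : Finset (Finset α)}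
    (hG : G ⊆ powersetCard ℓ univ) :
    (Fintype.card α).choose ℓ * ∑ φ : Fin u × Fin ℓ ↪ α, #{j | block φ j ∈ G} =
      u * #G * Fintype.card (Fin u × Fin ℓ ↪ α) := by
  have hcount : ∀ j : Fin u, (Fintype.card α).choose ℓ * #{φ | block φ j ∈ G} =
      #G * Fintype.card (Fin u × Fin ℓ ↪ α) := fun j => by
    rw [← card_univ, ← card_powersetCard]
    refine card_mul_card_filter_mem_of_card_fiber_eq (fun φ => block φ j)
      (fun φ => mem_powersetCard.2 ⟨subset_univ _, card_block φ j⟩) (fun A hA B hB => ?_) hG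
    exact card_filter_block_eq_of_card_eq j (mem_powersetCard.1 hA).2 (mem_powersetCard.1 hB).2
  simp only [card_filter]
  rw [sum_comm, mul_sum]
  simp only [← card_filter, hcount, sum_const, card_univ, Fintype.card_fin, smul_eq_mul]
  ring

theorem weightedCard_mul_le {s : ℕ} {F : Fin (s + 1) → Finset (Finset α)}
    (hsub : ∀ k, F k ⊆ powersetCard ℓ univ) (hF : Antitone F) (hcross : CrossDependent F)
    (hu : u ≤ 2 * s + 1) (huℓ : u * ℓ ≤ Fintype.card α) :
    weightedCard F * u ≤ s * (2 * s + 1) * (Fintype.card α).choose ℓ := by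
  set N := Fintype.card (Fin u × Fin ℓ ↪ α)
  have hN : 0 < N := Fintype.card_pos_iff.2 (Embedding.nonempty_of_card_le (by simpa))
  have hsum := mul_sum_weightedCard_eq univ (fun φ k => ({j | block φ j ∈ F k} : Finset (Fin u)))
    F (a := (Fintype.card α).choose ℓ) (b := u * N)
    fun k => by rw [choose_mul_sum_card_filter_block_mem (hsub k)]; ring
  have hle : ∑ φ : Fin u × Fin ℓ ↪ α,
      weightedCard (fun k => ({j | block φ j ∈ F k} : Finset (Fin u))) ≤ N * (s * (2 * s + 1)) := by
    simpa only [card_univ, smul_eq_mul] using sum_le_card_nsmul univ _ _ fun φ _ =>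
      weightedCard_filter_block_mem_le (ℓ := ℓ) hF hcross hu φ
  refine Nat.le_of_mul_le_mul_right ?_ hN
  calc weightedCard F * u * N = (Fintype.card α).choose ℓ * ∑ φ : Fin u × Fin ℓ ↪ α,
        weightedCard (fun k => ({j | block φ j ∈ F k} : Finset (Fin u))) := by rw [hsum]; ring
    _ ≤ (Fintype.card α).choose ℓ * (N * (s * (2 * s + 1))) := Nat.mul_le_mul_left _ hle
    _ = s * (2 * s + 1) * (Fintype.card α).choose ℓ * N := by ring

end Blocks

theorem card_filter_map_subtype_mem {α : Type*} [DecidableEq α] {Y : Finset α}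
    {G : Finset (Finset α)} (hG : ∀ A ∈ G, A ⊆ Y) :
    #{A : Finset Y | A.map (Embedding.subtype _) ∈ G} = #G := by
  refine card_bij (fun A _ => A.map (Embedding.subtype _)) (fun A hA => (mem_filter.1 hA).2)
    (fun A _ B _ h => map_injective _ h) fun B hB => ?_
  refine ⟨B.subtype (· ∈ Y), ?_, subtype_map_of_mem (hG B hB)⟩
  simpa [subtype_map_of_mem (hG B hB)] using hB

theorem CrossDependent.subtype {ι α : Type*} [DecidableEq α] {F : ι → Finset (Finset α)}
    (hF : CrossDependent F) (Y : Finset α) :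
    CrossDependent fun i => ({A | A.map (Embedding.subtype _) ∈ F i} : Finset (Finset Y)) :=
  fun ⟨f, hf, hdisj⟩ => hF ⟨fun i => (f i).map (Embedding.subtype _),
    fun i => (mem_filter.1 (hf i)).2, fun _ _ hij => disjoint_map _ |>.2 (hdisj hij)⟩

theorem weightedCard_mul_le_of_subset_powersetCard {α : Type*} [DecidableEq α] {Y : Finset α}
    {u ℓ s : ℕ} {F : Fin (s + 1) → Finset (Finset α)} (hsub : ∀ k, F k ⊆ Y.powersetCard ℓ)
    (hF : Antitone F) (hcross : CrossDependent F) (hu : u ≤ 2 * s + 1) (huℓ : u * ℓ ≤ #Y) :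
    weightedCard F * u ≤ s * (2 * s + 1) * (#Y).choose ℓ := by
  set FY : Fin (s + 1) → Finset (Finset Y) := fun k => {A | A.map (Embedding.subtype _) ∈ F k}
  have hcard (k) : #(FY k) = #(F k) :=
    card_filter_map_subtype_mem fun A hA => (mem_powersetCard.1 (hsub k hA)).1
  have hFY : weightedCard FY = weightedCard F := by simp only [weightedCard, hcard]
  rw [← hFY, ← Fintype.card_coe Y]
  refine weightedCard_mul_le (fun k A hA => ?_) (fun k k' hkk' A hA => ?_) (hcross.subtype Y) hu
    (by simpa using huℓ)
  · refine mem_powersetCard.2 ⟨subset_univ _, ?_⟩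
    simpa using (mem_powersetCard.1 (hsub k (mem_filter.1 hA).2)).2
  · exact mem_filter.2 ⟨mem_univ _, hF hkk' (mem_filter.1 hA).2⟩

theorem stmt_5_general (β : ℝ) (hβ0 : 0 < β) (hβ1 : β < 1) (ℓ s : ℕ)
    (Y : Finset ℕ) (F : Fin (s + 1) → Finset (Finset ℕ))
    (hsub : ∀ i, F i ⊆ Y.powersetCard ℓ)
    (hnested : ∀ i j : Fin (s + 1), i ≤ j → F j ⊆ F i)
    (hcross : ¬ ∃ f : Fin (s + 1) → Finset ℕ, (∀ i, f i ∈ F i) ∧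
        ∀ i j, i ≠ j → Disjoint (f i) (f j))
    (t : ℕ) (hY : t * ℓ ≤ Y.card) (ht : β * (2 * s + 1) ≤ (t : ℝ)) :
    (∑ i : Fin s, ((F i.castSucc).card : ℝ)) + ((s : ℝ) + 1) * ((F (Fin.last s)).card : ℝ) ≤
      (s / β) * (Y.card.choose ℓ : ℝ) := by
  set u := min t (2 * s + 1)
  have hbound : weightedCard F * u ≤ s * (2 * s + 1) * Y.card.choose ℓ :=
    weightedCard_mul_le_of_subset_powersetCard hsub (fun k k' hkk' => hnested k k' hkk') hcross
      (min_le_right _ _) ((Nat.mul_le_mul_right ℓ (min_le_left _ _)).trans hY)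
  have hu : β * (2 * s + 1) ≤ u := by
    rw [Nat.cast_min]
    exact le_min ht (by push_cast; nlinarith)
  have hW : (weightedCard F : ℝ) * u ≤ s * (2 * s + 1) * Y.card.choose ℓ := by
    exact_mod_cast hbound
  rw [show (∑ i : Fin s, ((F i.castSucc).card : ℝ)) + ((s : ℝ) + 1) * ((F (Fin.last s)).card : ℝ)
    = weightedCard F by simp [weightedCard], div_mul_eq_mul_div, le_div_iff₀ hβ0]
  refine le_of_mul_le_mul_right ?_ (by positivity : (0 : ℝ) < 2 * s + 1)
  calc (weightedCard F : ℝ) * β * (2 * s + 1) = weightedCard F * (β * (2 * s + 1)) := by ring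
    _ ≤ weightedCard F * u := by gcongr
    _ ≤ s * (2 * s + 1) * Y.card.choose ℓ := hW
    _ = s * Y.card.choose ℓ * (2 * s + 1) := by ring

/-- Theorem 2.2 (Frankl): if `F₁ ⊇ F₂ ⊇ … ⊇ F_{s+1}` are nested, cross-dependent families of
`ℓ`-subsets of a finite set `Y`, and `t` is an integer with `|Y| ≥ tℓ` and `t ≥ β(2s+1)` for
some `β ∈ (0,1)`, then `|F₁| + … + |F_s| + (s+1)|F_{s+1}| ≤ (s/β)·C(|Y|,ℓ)`. -/
theorem stmt_5 (β : ℝ) (hβ0 : 0 < β) (hβ1 : β < 1) (ℓ s : ℕ) (hℓ : 0 < ℓ) (hs : 0 < s)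
    (Y : Finset ℕ) (F : Fin (s + 1) → Finset (Finset ℕ))
    (hsub : ∀ i, F i ⊆ Y.powersetCard ℓ)
    (hnested : ∀ i j : Fin (s + 1), i ≤ j → F j ⊆ F i)
    (hcross : ¬ ∃ f : Fin (s + 1) → Finset ℕ, (∀ i, f i ∈ F i) ∧
        ∀ i j, i ≠ j → Disjoint (f i) (f j))
    (t : ℕ) (hY : t * ℓ ≤ Y.card) (ht : β * (2 * s + 1) ≤ (t : ℝ)) :
    (∑ i : Fin s, ((F i.castSucc).card : ℝ)) + ((s : ℝ) + 1) * ((F (Fin.last s)).card : ℝ) ≤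
      (s / β) * (Y.card.choose ℓ : ℝ) :=
  stmt_5_general β hβ0 hβ1 ℓ s Y F hsub hnested hcross t hY ht
end

section
/- Let k, d, n be integers with n ≥ k ≥ 3 and 1 ≤ d ≤ k−2, and let a ∈ [0, 1/k] be a real number. Suppose H is a k-uniform hypergraph on n vertices such that δ_d(H) ≥ f₀^{an}(k−d, n−d), where f₀^{s}(j, m) is the smallest integer M such that every m-vertex j-uniform hypergraph with at least M edges has a fractional matching of size at least s. Then H has a fractional matching of size at least a·n. -/
/-- A fractional matching of a `j`-graph `H` on `Fin m`: weights in `[0,1]`, supported on the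
edges, with total weight at each vertex at most `1`. -/
def IsFracMatching {m : ℕ} (H : Finset (Finset (Fin m))) (w : Finset (Fin m) → ℝ) : Prop :=
  (∀ e, 0 ≤ w e ∧ w e ≤ 1) ∧ (∀ e ∉ H, w e = 0) ∧
    ∀ v : Fin m, ∑ e ∈ H.filter (fun e => v ∈ e), w e ≤ 1

/-- `f₀^s(j,m)`: the smallest integer `M` such that every `m`-vertex `j`-graph with at least `M`
edges has a fractional matching of size at least `s`. -/
noncomputable def f0 (j m : ℕ) (s : ℝ) : ℕ :=
  sInf { M : ℕ | ∀ H : Finset (Finset (Fin m)), H ⊆ Finset.univ.powersetCard j →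
    M ≤ H.card → ∃ w : Finset (Fin m) → ℝ, IsFracMatching H w ∧ s ≤ ∑ e ∈ H, w e }

open Finset

namespace Stmt9

lemma f0_spec {j m : ℕ} {s : ℝ} (H : Finset (Finset (Fin m)))
    (hH : H ⊆ Finset.univ.powersetCard j) (hcard : f0 j m s ≤ H.card) :
    ∃ w : Finset (Fin m) → ℝ, IsFracMatching H w ∧ s ≤ ∑ e ∈ H, w e := by
  have hne : { M : ℕ | ∀ H : Finset (Finset (Fin m)), H ⊆ Finset.univ.powersetCard j →
      M ≤ H.card → ∃ w : Finset (Fin m) → ℝ, IsFracMatching H w ∧ s ≤ ∑ e ∈ H, w e }.Nonempty := by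
    refine ⟨(Finset.univ.powersetCard j : Finset (Finset (Fin m))).card + 1, fun H' h1 h2 => ?_⟩
    have := Finset.card_le_card h1
    omega
  exact Nat.sInf_mem hne H hH hcard

lemma zero_matching {m : ℕ} (H : Finset (Finset (Fin m))) : IsFracMatching H (fun _ => 0) :=
  ⟨fun _ => ⟨le_refl _, zero_le_one⟩, fun _ _ => rfl, fun _ => by simp⟩

lemma exists_max {m : ℕ} (H : Finset (Finset (Fin m))) :
    ∃ w, IsFracMatching H w ∧ ∀ w', IsFracMatching H w' → ∑ e ∈ H, w' e ≤ ∑ e ∈ H, w e := by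
  have hclosed : IsClosed {w : Finset (Fin m) → ℝ | IsFracMatching H w} := by
    have heq : {w : Finset (Fin m) → ℝ | IsFracMatching H w} =
        (⋂ e, ({w : Finset (Fin m) → ℝ | 0 ≤ w e} ∩ {w | w e ≤ 1})) ∩
        ((⋂ e ∈ {e | e ∉ H}, {w : Finset (Fin m) → ℝ | w e = 0}) ∩
         (⋂ v : Fin m, {w : Finset (Fin m) → ℝ |
            ∑ e ∈ H.filter (fun e => v ∈ e), w e ≤ 1})) := by
      ext w
      simp only [IsFracMatching, Set.mem_setOf_eq, Set.mem_inter_iff, Set.mem_iInter,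
        Set.mem_setOf_eq]
    rw [heq]
    refine IsClosed.inter (isClosed_iInter fun e => IsClosed.inter ?_ ?_) (IsClosed.inter ?_ ?_)
    · exact isClosed_le continuous_const (continuous_apply e)
    · exact isClosed_le (continuous_apply e) continuous_const
    · exact isClosed_iInter fun e => isClosed_iInter fun _ =>
        isClosed_eq (continuous_apply e) continuous_const
    · exact isClosed_iInter fun v => isClosed_le
        (continuous_finset_sum _ fun e _ => continuous_apply e) continuous_const
  have hcomp : IsCompact {w : Finset (Fin m) → ℝ | IsFracMatching H w} := by
    refine IsCompact.of_isClosed_subset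
      (isCompact_univ_pi (fun _ : Finset (Fin m) => isCompact_Icc (a := (0:ℝ)) (b := 1)))
      hclosed ?_
    intro w hw
    rw [Set.mem_univ_pi]
    exact fun e => ⟨(hw.1 e).1, (hw.1 e).2⟩
  obtain ⟨w, hw, hmax⟩ := hcomp.exists_isMaxOn ⟨fun _ => 0, zero_matching H⟩
    ((continuous_finset_sum H fun e _ => continuous_apply e).continuousOn)
  exact ⟨w, hw, fun w' hw' => hmax hw'⟩

variable {m : ℕ}

noncomputable def pre (v : Fin (m+1)) (e : Finset (Fin (m+1))) : Finset (Fin m) :=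
  e.preimage v.succAbove (Fin.succAbove_right_injective.injOn)

lemma mem_pre {v : Fin (m+1)} {e : Finset (Fin (m+1))} {x : Fin m} :
    x ∈ pre v e ↔ v.succAbove x ∈ e := Finset.mem_preimage

lemma image_pre {v : Fin (m+1)} {e : Finset (Fin (m+1))} (hv : v ∈ e) :
    (pre v e).image v.succAbove = e.erase v := by
  ext y
  simp only [mem_image, mem_erase, mem_pre]
  constructor
  · rintro ⟨x, hx, rfl⟩
    exact ⟨Fin.succAbove_ne v x, hx⟩
  · rintro ⟨hne, hy⟩
    obtain ⟨x, rfl⟩ := Fin.exists_succAbove_eq hne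
    exact ⟨x, hy, rfl⟩

lemma card_pre {v : Fin (m+1)} {e : Finset (Fin (m+1))} (hv : v ∈ e) :
    (pre v e).card = e.card - 1 := by
  rw [← Finset.card_image_of_injective (pre v e) Fin.succAbove_right_injective,
    image_pre hv, Finset.card_erase_of_mem hv]

lemma pre_inj {v : Fin (m+1)} {e1 e2 : Finset (Fin (m+1))} (h1 : v ∈ e1) (h2 : v ∈ e2)
    (h : pre v e1 = pre v e2) : e1 = e2 := by
  ext y
  rcases eq_or_ne y v with rfl | hne
  · simp [h1, h2]
  · obtain ⟨x, rfl⟩ := Fin.exists_succAbove_eq hne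
    rw [← mem_pre, ← mem_pre, h]

noncomputable def linkOf (v : Fin (m+1)) (H : Finset (Finset (Fin (m+1)))) : Finset (Finset (Fin m)) :=
  (H.filter (fun e => v ∈ e)).image (pre v)

lemma linkOf_subset {v : Fin (m+1)} {H : Finset (Finset (Fin (m+1)))} {k : ℕ}
    (hH : H ⊆ Finset.univ.powersetCard k) :
    linkOf v H ⊆ Finset.univ.powersetCard (k-1) := by
  intro e' he'
  obtain ⟨e, he, rfl⟩ := Finset.mem_image.1 he'
  rw [mem_filter] at he
  rw [Finset.mem_powersetCard]
  refine ⟨Finset.subset_univ _, ?_⟩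
  rw [card_pre he.2]
  have := (Finset.mem_powersetCard.1 (hH he.1)).2
  omega

lemma linkOf_card {v : Fin (m+1)} {H : Finset (Finset (Fin (m+1)))} :
    (linkOf v H).card = (H.filter (fun e => v ∈ e)).card := by
  apply Finset.card_image_of_injOn
  intro e1 h1 e2 h2 h
  exact pre_inj (mem_filter.1 h1).2 (mem_filter.1 h2).2 h

lemma filter_linkOf {v : Fin (m+1)} {H : Finset (Finset (Fin (m+1)))} (S' : Finset (Fin m)) :
    (linkOf v H).filter (fun e' => S' ⊆ e') =
      (H.filter (fun e => insert v (S'.image v.succAbove) ⊆ e)).image (pre v) := by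
  ext e'
  simp only [mem_filter, linkOf, mem_image, Finset.insert_subset_iff]
  constructor
  · rintro ⟨⟨e, ⟨he, hve⟩, rfl⟩, hS⟩
    refine ⟨e, ⟨he, hve, ?_⟩, rfl⟩
    rw [Finset.image_subset_iff]
    intro x hx
    exact mem_pre.1 (hS hx)
  · rintro ⟨e, ⟨he, hv2, hS⟩, rfl⟩
    refine ⟨⟨e, ⟨he, hv2⟩, rfl⟩, ?_⟩
    intro x hx
    rw [mem_pre]
    exact hS (Finset.mem_image_of_mem _ hx)

lemma linkOf_deg {v : Fin (m+1)} {H : Finset (Finset (Fin (m+1)))} (S' : Finset (Fin m)) :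
    ((linkOf v H).filter (fun e' => S' ⊆ e')).card =
      (H.filter (fun e => insert v (S'.image v.succAbove) ⊆ e)).card := by
  rw [filter_linkOf]
  apply Finset.card_image_of_injOn
  intro e1 h1 e2 h2 h
  have hv1 : v ∈ e1 := (Finset.insert_subset_iff.1 (mem_filter.1 h1).2).1
  have hv2 : v ∈ e2 := (Finset.insert_subset_iff.1 (mem_filter.1 h2).2).1
  exact pre_inj hv1 hv2 h

lemma core {k : ℕ} (hk : 1 ≤ k) (s : ℝ) (hs0 : 0 ≤ s) (hsn : s * k ≤ (m+1 : ℕ))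
    (H : Finset (Finset (Fin (m+1)))) (hH : H ⊆ Finset.univ.powersetCard k)
    (hlink : ∀ v : Fin (m+1), ∃ u : Finset (Fin m) → ℝ,
      IsFracMatching (linkOf v H) u ∧ s ≤ ∑ e ∈ linkOf v H, u e) :
    ∃ w, IsFracMatching H w ∧ s ≤ ∑ e ∈ H, w e := by
  obtain ⟨w, hw, hmax⟩ := exists_max H
  refine ⟨w, hw, ?_⟩
  by_contra hlt
  push_neg at hlt
  set L : Fin (m+1) → ℝ := fun v => ∑ e ∈ H.filter (fun e => v ∈ e), w e with hLdef
  have hsum : ∑ v, L v = (k:ℝ) * ∑ e ∈ H, w e := by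
    have h1 : ∀ v : Fin (m+1), L v = ∑ e ∈ H, if v ∈ e then w e else 0 := by
      intro v; rw [hLdef]; exact (Finset.sum_filter _ _)
    calc ∑ v, L v = ∑ v : Fin (m+1), ∑ e ∈ H, if v ∈ e then w e else 0 := by
          exact Finset.sum_congr rfl fun v _ => h1 v
      _ = ∑ e ∈ H, ∑ v : Fin (m+1), if v ∈ e then w e else 0 := Finset.sum_comm
      _ = ∑ e ∈ H, (k:ℝ) * w e := by
          refine Finset.sum_congr rfl fun e he => ?_
          rw [Finset.sum_ite_mem, Finset.univ_inter, Finset.sum_const, nsmul_eq_mul]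
          have : e.card = k := (Finset.mem_powersetCard.1 (hH he)).2
          rw [this]
      _ = (k:ℝ) * ∑ e ∈ H, w e := by rw [Finset.mul_sum]
  have hexv : ∃ v, L v < 1 := by
    by_contra h
    push_neg at h
    have h2 : ((m:ℝ)+1) ≤ ∑ v, L v := by
      calc ((m:ℝ)+1) = ∑ _v : Fin (m+1), (1:ℝ) := by simp
        _ ≤ ∑ v, L v := Finset.sum_le_sum fun v _ => h v
    have hk0 : (0:ℝ) < k := by exact_mod_cast hk
    have h3 : (k:ℝ) * ∑ e ∈ H, w e < k * s := by
      exact mul_lt_mul_of_pos_left hlt hk0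
    have h4 : s * (k:ℝ) ≤ (m:ℝ) + 1 := by exact_mod_cast hsn
    rw [hsum] at h2
    nlinarith
  obtain ⟨v, hv⟩ := hexv
  obtain ⟨u, hu, hus⟩ := hlink v
  set σ := ∑ e ∈ linkOf v H, u e with hσdef
  have hσ0 : 0 ≤ σ := Finset.sum_nonneg fun e _ => (hu.1 e).1
  have hden : 0 < σ + 1 - L v := by linarith
  set t := (1 - L v) / (σ + 1 - L v) with htdef
  have ht0 : 0 < t := div_pos (by linarith) hden
  have ht1 : t ≤ 1 := by rw [div_le_one hden]; linarith
  have htkey : t * (σ + 1 - L v) = 1 - L v := by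
    rw [htdef, div_mul_cancel₀ _ (ne_of_gt hden)]
  set uh : Finset (Fin (m+1)) → ℝ :=
    fun e => if v ∈ e ∧ e ∈ H then u (pre v e) else 0 with huhdef
  have huh : ∀ e, uh e = if v ∈ e ∧ e ∈ H then u (pre v e) else 0 := fun _ => rfl
  have huh01 : ∀ e, 0 ≤ uh e ∧ uh e ≤ 1 := by
    intro e
    rw [huh]
    split
    · exact hu.1 _
    · exact ⟨le_refl _, zero_le_one⟩
  -- sum of uh over edges containing v equals σ
  have hinjfil : ∀ e1 ∈ H.filter (fun e => v ∈ e), ∀ e2 ∈ H.filter (fun e => v ∈ e),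
      pre v e1 = pre v e2 → e1 = e2 :=
    fun e1 h1 e2 h2 h => pre_inj (mem_filter.1 h1).2 (mem_filter.1 h2).2 h
  have hsum_v : ∑ e ∈ H.filter (fun e => v ∈ e), uh e = σ := by
    rw [hσdef, linkOf, Finset.sum_image hinjfil]
    refine Finset.sum_congr rfl fun e he => ?_
    rw [mem_filter] at he
    rw [huh, if_pos ⟨he.2, he.1⟩]
  -- sum of uh over all of H equals σ
  have hsum_H : ∑ e ∈ H, uh e = σ := by
    rw [← hsum_v]
    refine (Finset.sum_filter_of_ne fun e he hne => ?_).symm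
    by_contra hve
    exact hne (by rw [huh]; simp [hve])
  -- sum of uh over edges containing y = succAbove x is at most 1
  have hsum_x : ∀ x : Fin m,
      ∑ e ∈ H.filter (fun e => v.succAbove x ∈ e), uh e ≤ 1 := by
    intro x
    have hsplit : ∑ e ∈ H.filter (fun e => v.succAbove x ∈ e), uh e
        = ∑ e ∈ (H.filter (fun e => v.succAbove x ∈ e)).filter (fun e => v ∈ e), uh e := by
      refine (Finset.sum_filter_of_ne fun e he hne => ?_).symm
      by_contra hve
      exact hne (by rw [huh]; simp [hve])
    rw [hsplit]
    have himg : ((H.filter (fun e => v.succAbove x ∈ e)).filter (fun e => v ∈ e)).image (pre v)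
        = (linkOf v H).filter (fun e' => x ∈ e') := by
      ext e'
      simp only [mem_image, mem_filter, linkOf]
      constructor
      · rintro ⟨e, ⟨⟨he, hye⟩, hve⟩, rfl⟩
        exact ⟨⟨e, ⟨he, hve⟩, rfl⟩, mem_pre.2 hye⟩
      · rintro ⟨⟨e, ⟨he, hve⟩, rfl⟩, hx⟩
        exact ⟨e, ⟨⟨he, mem_pre.1 hx⟩, hve⟩, rfl⟩
    have hinj2 : ∀ e1 ∈ (H.filter (fun e => v.succAbove x ∈ e)).filter (fun e => v ∈ e),
        ∀ e2 ∈ (H.filter (fun e => v.succAbove x ∈ e)).filter (fun e => v ∈ e),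
        pre v e1 = pre v e2 → e1 = e2 := by
      intro e1 h1 e2 h2 h
      rw [mem_filter] at h1 h2
      exact pre_inj h1.2 h2.2 h
    have hsi := Finset.sum_image (f := u) hinj2
    rw [himg] at hsi
    have hcongr : ∑ e ∈ (H.filter (fun e => v.succAbove x ∈ e)).filter (fun e => v ∈ e), uh e
        = ∑ e ∈ (H.filter (fun e => v.succAbove x ∈ e)).filter (fun e => v ∈ e),
            u (pre v e) := by
      refine Finset.sum_congr rfl fun e he => ?_
      rw [mem_filter, mem_filter] at he
      rw [huh, if_pos ⟨he.2, he.1.1⟩]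
    rw [hcongr, ← hsi]
    exact hu.2.2 x
  -- define the improved matching
  set w' : Finset (Fin (m+1)) → ℝ := fun e => (1-t) * w e + t * uh e with hw'def
  have hw'e : ∀ e, w' e = (1-t) * w e + t * uh e := fun _ => rfl
  have hw'match : IsFracMatching H w' := by
    refine ⟨?_, ?_, ?_⟩
    · intro e
      have h1 := (hw.1 e)
      have h2 := huh01 e
      constructor
      · have := mul_nonneg (by linarith : (0:ℝ) ≤ 1 - t) h1.1
        have := mul_nonneg (le_of_lt ht0) h2.1
        rw [hw'e]; linarith
      · have ha : (1-t) * w e ≤ (1-t) * 1 := by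
          apply mul_le_mul_of_nonneg_left h1.2 (by linarith)
        have hb : t * uh e ≤ t * 1 := by
          apply mul_le_mul_of_nonneg_left h2.2 (le_of_lt ht0)
        rw [hw'e]; linarith
    · intro e he
      have h1 := hw.2.1 e he
      have h2 : uh e = 0 := by rw [huh]; simp [he]
      rw [hw'e, h1, h2]; ring
    · intro z
      have hexpand : ∑ e ∈ H.filter (fun e => z ∈ e), w' e
          = (1-t) * (∑ e ∈ H.filter (fun e => z ∈ e), w e)
            + t * (∑ e ∈ H.filter (fun e => z ∈ e), uh e) := by
        simp only [hw'e]
        rw [Finset.sum_add_distrib, Finset.mul_sum, Finset.mul_sum]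
      rw [hexpand]
      rcases eq_or_ne z v with rfl | hne
      · rw [hsum_v]
        have hLv : (∑ e ∈ H.filter (fun e => z ∈ e), w e) = L z := rfl
        rw [hLv]
        nlinarith [htkey, ht0]
      · obtain ⟨x, rfl⟩ := Fin.exists_succAbove_eq hne
        have h1 : ∑ e ∈ H.filter (fun e => v.succAbove x ∈ e), w e ≤ 1 := hw.2.2 _
        have h2 := hsum_x x
        nlinarith [ht0, ht1]
  have hgain : ∑ e ∈ H, w' e = ∑ e ∈ H, w e + t * (σ - ∑ e ∈ H, w e) := by
    simp only [hw'e]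
    rw [Finset.sum_add_distrib, ← Finset.mul_sum, ← Finset.mul_sum, hsum_H]
    ring
  have hbig : ∑ e ∈ H, w e < ∑ e ∈ H, w' e := by
    rw [hgain]
    have : 0 < σ - ∑ e ∈ H, w e := by linarith
    nlinarith
  exact absurd (hmax w' hw'match) (not_le.2 hbig)

lemma aux : ∀ (d k n : ℕ) (s : ℝ), 1 ≤ d → d + 2 ≤ k → k ≤ n → 0 ≤ s → s * k ≤ n →
    ∀ H : Finset (Finset (Fin n)), H ⊆ Finset.univ.powersetCard k →
    (∀ S : Finset (Fin n), S.card = d → f0 (k - d) (n - d) s ≤ (H.filter fun e => S ⊆ e).card) →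
    ∃ w : Finset (Fin n) → ℝ, IsFracMatching H w ∧ s ≤ ∑ e ∈ H, w e := by
  intro d
  induction d with
  | zero => intro k n s _ h; exact absurd h (by omega)
  | succ d' ih =>
    intro k n s _ hdk hkn hs0 hsn H hH hdeg
    obtain ⟨m, rfl⟩ : ∃ m, n = m + 1 := ⟨n - 1, by omega⟩
    apply core (k := k) (by omega) s hs0 hsn H hH
    intro v
    rcases Nat.eq_zero_or_pos d' with rfl | hd'
    · -- base case d = 1
      apply f0_spec (j := k - 1) (linkOf v H) (linkOf_subset hH)
      have hd := hdeg {v} (by simp)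
      have hfil : H.filter (fun e => ({v} : Finset (Fin (m+1))) ⊆ e)
          = H.filter (fun e => v ∈ e) := by
        apply Finset.filter_congr
        intro e _
        simp [Finset.singleton_subset_iff]
      rw [hfil] at hd
      rw [linkOf_card]
      have h1 : k - (0 + 1) = k - 1 := by omega
      have h2 : m + 1 - (0 + 1) = m := by omega
      rw [h1, h2] at hd
      exact hd
    · -- inductive step
      have hmono : s * ((k:ℕ) - 1 : ℕ) ≤ (m : ℝ) := by
        have hc : (((k - 1 : ℕ)) : ℝ) = (k:ℝ) - 1 := by
          have : (1:ℕ) ≤ k := by omega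
          push_cast [this]
          ring
        rw [hc]
        have hkm : (k : ℝ) ≤ (m:ℝ) + 1 := by exact_mod_cast hkn
        have hsn' : s * (k:ℝ) ≤ (m:ℝ) + 1 := by exact_mod_cast hsn
        rcases le_total s 1 with h | h
        · nlinarith
        · nlinarith
      apply ih (k - 1) m s hd' (by omega) (by omega) hs0 hmono (linkOf v H) (linkOf_subset hH)
      intro S' hS'
      rw [linkOf_deg]
      have hcard : (insert v (S'.image v.succAbove)).card = d' + 1 := by
        rw [Finset.card_insert_of_notMem, Finset.card_image_of_injective _
          Fin.succAbove_right_injective, hS']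
        intro hmem
        obtain ⟨x, _, hx⟩ := Finset.mem_image.1 hmem
        exact Fin.succAbove_ne v x hx
      have := hdeg (insert v (S'.image v.succAbove)) hcard
      have h1 : k - 1 - d' = k - (d' + 1) := by omega
      have h2 : m - d' = m + 1 - (d' + 1) := by omega
      rw [h1, h2]
      exact this

end Stmt9

/-- Proposition 3.1 (Kühn–Osthus–Townsend): for `n ≥ k ≥ 3`, `1 ≤ d ≤ k-2` and `a ∈ [0,1/k]`,
every `n`-vertex `k`-graph `H` with `δ_d(H) ≥ f₀^{an}(k-d, n-d)` has a fractional matching of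
size at least `a·n`. -/
theorem stmt_9 (n k d : ℕ) (hnk : k ≤ n) (hk : 3 ≤ k) (hd1 : 1 ≤ d) (hd2 : d ≤ k - 2)
    (a : ℝ) (ha0 : 0 ≤ a) (ha1 : a ≤ 1 / (k : ℝ))
    (H : Finset (Finset (Fin n))) (hH : H ⊆ Finset.univ.powersetCard k)
    (hdeg : ∀ S : Finset (Fin n), S.card = d →
      f0 (k - d) (n - d) (a * n) ≤ (H.filter fun e => S ⊆ e).card) :
    ∃ w : Finset (Fin n) → ℝ, IsFracMatching H w ∧ a * n ≤ ∑ e ∈ H, w e := by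
  have hk0 : (0:ℝ) < k := by
    have : (0:ℕ) < k := by omega
    exact_mod_cast this
  have hdk : d + 2 ≤ k := by omega
  have hs0 : 0 ≤ a * n := mul_nonneg ha0 (Nat.cast_nonneg n)
  have hak : a * (k:ℝ) ≤ 1 := by
    have h1 : a * (k:ℝ) ≤ (1 / (k:ℝ)) * k := mul_le_mul_of_nonneg_right ha1 (le_of_lt hk0)
    rwa [one_div_mul_cancel (ne_of_gt hk0)] at h1
  have hsn : a * n * k ≤ (n:ℝ) := by
    have hn0 : (0:ℝ) ≤ n := Nat.cast_nonneg n
    nlinarith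
  exact Stmt9.aux d k n (a * n) hd1 hdk hnk hs0 hsn H hH hdeg
end

section
/- For all integers k ≥ 20 and d with 0.42·k ≤ d < k/2, one has g(k,d) < 1/2, where g(k,d) := 1 − (1 − (k−d)(k−2d−1)/(k−1)²)·(1 − 1/k)^{k−d}. -/
/-!
Put `n = k - d ≤ 0.58 k`. The power is bounded below through `1 - 1/k ≥ exp (-1/(k-1))`, so
`(1 - 1/k)^n ≥ exp (-0.58 k/(k-1)) ≥ exp (-0.58) (1 - 0.58/(k-1))`, and `exp (-0.58) > 0.5598`.
The other factor is at least `1 - 0.58 k (0.16 k - 1)/(k-1)²`. The product of the two lower bounds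
exceeds `1/2` for `k ≥ 20` by a cubic polynomial inequality.
-/

open Real

lemma Real.exp_neg_inv_sub_one_le_one_sub_inv {x : ℝ} (hx : 1 < x) :
    exp (-(1 / (x - 1))) ≤ 1 - 1 / x := by
  have hx1 : 0 < x - 1 := by linarith
  have h : x / (x - 1) ≤ exp (1 / (x - 1)) := by
    have := add_one_le_exp (1 / (x - 1))
    rwa [div_add_one hx1.ne', add_sub_cancel] at this
  calc exp (-(1 / (x - 1))) = (exp (1 / (x - 1)))⁻¹ := exp_neg _
    _ ≤ (x / (x - 1))⁻¹ := inv_anti₀ (by positivity) h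
    _ = 1 - 1 / x := by field_simp

lemma Real.exp_neg_div_sub_one_le_one_sub_inv_pow {x : ℝ} (hx : 1 < x) (n : ℕ) :
    exp (-(n / (x - 1))) ≤ (1 - 1 / x) ^ n := by
  calc exp (-(n / (x - 1))) = exp (-(1 / (x - 1))) ^ n := by
        rw [← exp_nat_mul]; ring_nf
    _ ≤ (1 - 1 / x) ^ n :=
        pow_le_pow_left₀ (exp_pos _).le (exp_neg_inv_sub_one_le_one_sub_inv hx) n

lemma Real.exp_point58_lt : exp 0.58 < 1.7861 := by
  have h : exp 0.58 ^ 50 < 1.7861 ^ 50 := by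
    calc exp 0.58 ^ 50 = exp 1 ^ 29 := by rw [← exp_nat_mul, ← exp_nat_mul]; norm_num
      _ < 2.7182818286 ^ 29 := pow_lt_pow_left₀ exp_one_lt_d9 (exp_pos 1).le (by norm_num)
      _ < 1.7861 ^ 50 := by norm_num
  exact lt_of_pow_lt_pow_left₀ 50 (by norm_num) h

lemma Real.exp_neg_point58_gt : 0.5598 < exp (-0.58) := by
  rw [exp_neg, lt_inv_comm₀ (by norm_num) (exp_pos _)]
  exact exp_point58_lt.trans (by norm_num)

lemma one_sub_inv_pow_ge {k : ℝ} (hk : 1 < k) {n : ℕ} (hn : (n : ℝ) ≤ 0.58 * k) :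
    0.5598 * (1 - 0.58 / (k - 1)) ≤ (1 - 1 / k) ^ n := by
  have hk1 : 0 < k - 1 := by linarith
  have hsplit : -(0.58 * k / (k - 1)) = -0.58 + -(0.58 / (k - 1)) := by field_simp; ring
  calc 0.5598 * (1 - 0.58 / (k - 1)) ≤ 0.5598 * exp (-(0.58 / (k - 1))) := by
        linarith [add_one_le_exp (-(0.58 / (k - 1)))]
    _ ≤ exp (-0.58) * exp (-(0.58 / (k - 1))) := by gcongr; exact exp_neg_point58_gt.le
    _ = exp (-(0.58 * k / (k - 1))) := by rw [hsplit, exp_add]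
    _ ≤ exp (-(n / (k - 1))) := by gcongr
    _ ≤ (1 - 1 / k) ^ n := exp_neg_div_sub_one_le_one_sub_inv_pow hk n

lemma sub_mul_sub_sub_one_le {k d : ℝ} (hd : 0.42 * k ≤ d) (hdk : 2 * d + 1 ≤ k) :
    (k - d) * (k - 2 * d - 1) ≤ 0.58 * k * (0.16 * k - 1) :=
  mul_le_mul (by linarith) (by linarith) (by linarith) (by linarith)

lemma half_lt_of_twenty_le {k : ℝ} (hk : 20 ≤ k) :
    1 / 2 < (1 - 0.58 * k * (0.16 * k - 1) / (k - 1) ^ 2) * (0.5598 * (1 - 0.58 / (k - 1))) := by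
  have hk1 : 0 < k - 1 := by linarith
  have e : (1 - 0.58 * k * (0.16 * k - 1) / (k - 1) ^ 2) * (0.5598 * (1 - 0.58 / (k - 1)))
      = 0.5598 * (((k - 1) ^ 2 - 0.58 * k * (0.16 * k - 1)) * (k - 1 - 0.58)) / (k - 1) ^ 3 := by
    field_simp
  rw [e, lt_div_iff₀ (by positivity)]
  nlinarith [sq_nonneg (k - 20), mul_nonneg (sub_nonneg.2 hk) (sq_nonneg (k - 20))]

/-- For integers `k ≥ 20` and `0.42k ≤ d < k/2`, one has `g(k,d) < 1/2`, where
`g(k,d) = 1 - (1 - (k-d)(k-2d-1)/(k-1)²)(1 - 1/k)^{k-d}`. -/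
theorem stmt_13 (k d : ℕ) (hk : 20 ≤ k) (hd : 0.42 * (k : ℝ) ≤ (d : ℝ)) (hdk : 2 * d < k) :
    1 - (1 - ((k : ℝ) - d) * ((k : ℝ) - 2 * d - 1) / ((k : ℝ) - 1) ^ 2) *
        (1 - 1 / (k : ℝ)) ^ (k - d) < 1 / 2 := by
  have hk' : (20 : ℝ) ≤ k := by exact_mod_cast hk
  have hdk' : 2 * (d : ℝ) + 1 ≤ k := by exact_mod_cast hdk
  have hn : ((k - d : ℕ) : ℝ) ≤ 0.58 * k := by
    rw [Nat.cast_sub (by omega)]; linarith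
  have hA : 1 - 0.58 * k * (0.16 * k - 1) / ((k : ℝ) - 1) ^ 2
      ≤ 1 - ((k : ℝ) - d) * ((k : ℝ) - 2 * d - 1) / ((k : ℝ) - 1) ^ 2 :=
    sub_le_sub_left (div_le_div_of_nonneg_right (sub_mul_sub_sub_one_le hd hdk') (sq_nonneg _)) 1
  have hP : 0 ≤ 1 - 0.58 * k * (0.16 * k - 1) / ((k : ℝ) - 1) ^ 2 := by
    rw [sub_nonneg, div_le_one (by nlinarith)]; nlinarith
  have hL : 0 ≤ 0.5598 * (1 - 0.58 / ((k : ℝ) - 1)) := by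
    rw [mul_nonneg_iff_of_pos_left (by norm_num), sub_nonneg, div_le_one (by linarith)]; linarith
  suffices 1 / 2 < (1 - ((k : ℝ) - d) * ((k : ℝ) - 2 * d - 1) / ((k : ℝ) - 1) ^ 2) *
      (1 - 1 / (k : ℝ)) ^ (k - d) by linarith
  calc (1 : ℝ) / 2 < _ := half_lt_of_twenty_le hk'
    _ ≤ _ := mul_le_mul hA (one_sub_inv_pow_ge (by linarith) hn) hL (hP.trans hA)
end

section
/- For every integer k ≥ 2, the function h(k,x) := 1 − (3x − 2x²)·(1 − 1/k)^{(1−x)k} is decreasing in x on the interval (1/4, 1/2); and for every fixed x ∈ (1/4, 1/2), h(k,x) is decreasing in k for integers k ≥ 2. Moreover, h(20, 0.42) < 1/2. -/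
/-!
Write `h(k,x) = 1 - g(x) · a_k^(1-x)` with `g(x) = 3x - 2x²` and `a_k = (1 - 1/k)^k`.
Monotonicity in `x` holds because `g` is nonnegative and increasing on `[0, 3/4]` while
`a_k ∈ (0,1)` makes `a_k^(1-x)` increasing in `x`. Monotonicity in `k` reduces to the classical
fact that `a_k` increases strictly, proved by Bernoulli's inequality via the factorisation
`1 - 1/k = (1 - 1/k²) · k/(k+1)`. The value at `(20, 0.42)` is a rational estimate of
`(19/20)^(58/5)`.
-/

/-- `h(k,x) = 1 - (3x - 2x²)·(1 - 1/k)^{(1-x)k}` (real exponent). -/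
noncomputable def hFun (k : ℕ) (x : ℝ) : ℝ :=
  1 - (3 * x - 2 * x ^ 2) * (1 - 1 / (k : ℝ)) ^ ((1 - x) * (k : ℝ))

open Set

lemma one_sub_inv_pow_lt_succ {n : ℕ} (hn : 1 ≤ n) :
    (1 - 1 / (n : ℝ)) ^ n < (1 - 1 / ((n + 1 : ℕ) : ℝ)) ^ (n + 1) := by
  obtain ⟨K, hK⟩ : ∃ K : ℝ, K = n := ⟨_, rfl⟩
  obtain ⟨t, ht⟩ : ∃ t : ℝ, t = 1 / K ^ 2 := ⟨_, rfl⟩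
  have hK1 : 1 ≤ K := by rw [hK]; exact_mod_cast hn
  have ht0 : 0 < t := by rw [ht]; positivity
  have ht1 : t ≤ 1 := by rw [ht, div_le_one (by positivity)]; nlinarith
  have h_bernoulli : 1 + 1 / K ≤ (1 + t) ^ n := by
    have h := one_add_mul_le_pow (a := t) (by linarith) n
    rwa [← hK, show K * t = 1 / K by rw [ht]; field_simp] at h
  have h_prod : (1 - t) ^ n * (1 + t) ^ n < 1 := by
    rw [← mul_pow, show (1 - t) * (1 + t) = 1 - t ^ 2 by ring]
    exact pow_lt_one₀ (by nlinarith) (by nlinarith) (by omega)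
  have h_main : (1 - t) ^ n < K / (K + 1) := by
    rw [lt_div_iff₀ (by linarith)]
    have := mul_le_mul_of_nonneg_left h_bernoulli (pow_nonneg (by linarith : 0 ≤ 1 - t) n)
    calc (1 - t) ^ n * (K + 1) = (1 - t) ^ n * (1 + 1 / K) * K := by field_simp
      _ < 1 * K := by gcongr; linarith
      _ = K := one_mul K
  have h_factor : 1 - 1 / K = (1 - t) * (K / (K + 1)) := by rw [ht]; field_simp; ring
  have h_succ : 1 - 1 / (K + 1) = K / (K + 1) := by field_simp; ring
  push_cast
  rw [← hK, h_factor, h_succ, mul_pow, pow_succ _ n, mul_comm _ (K / (K + 1))]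
  gcongr

lemma strictMonoOn_one_sub_inv_pow :
    StrictMonoOn (fun n : ℕ => (1 - 1 / (n : ℝ)) ^ n) (Ici 1) :=
  strictMonoOn_of_lt_add_one ordConnected_Ici fun _ _ hn _ => one_sub_inv_pow_lt_succ hn

lemma one_sub_inv_natCast_nonneg (n : ℕ) : 0 ≤ 1 - 1 / (n : ℝ) :=
  sub_nonneg.2 ((one_div (n : ℝ)).symm ▸ Nat.cast_inv_le_one n)

lemma hFun_eq (k : ℕ) (x : ℝ) :
    hFun k x = 1 - (3 * x - 2 * x ^ 2) * ((1 - 1 / (k : ℝ)) ^ k) ^ (1 - x) := by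
  rw [hFun, mul_comm (1 - x), Real.rpow_mul (one_sub_inv_natCast_nonneg k), Real.rpow_natCast]

lemma hFun_strictAntiOn {k : ℕ} (hk : 2 ≤ k) : StrictAntiOn (hFun k) (Icc 0 (3 / 4)) := by
  intro x ⟨hx0, _⟩ y ⟨_, hy⟩ hxy
  have hk' : (2 : ℝ) ≤ k := by exact_mod_cast hk
  have hc0 : 0 < 1 - 1 / (k : ℝ) := by rw [sub_pos, div_lt_one (by linarith)]; linarith
  have hc1 : 1 - 1 / (k : ℝ) < 1 := by simp only [sub_lt_self_iff]; positivity
  have h_pow : (1 - 1 / (k : ℝ)) ^ ((1 - x) * k) < (1 - 1 / (k : ℝ)) ^ ((1 - y) * k) :=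
    Real.rpow_lt_rpow_of_exponent_gt hc0 hc1 (by nlinarith)
  have hg : 3 * x - 2 * x ^ 2 < 3 * y - 2 * y ^ 2 := by nlinarith
  unfold hFun
  have := mul_lt_mul'' hg h_pow (by nlinarith) (Real.rpow_nonneg hc0.le _)
  linarith

lemma hFun_index_strictAntiOn {x : ℝ} (hx : x ∈ Ioo 0 1) :
    StrictAntiOn (fun k => hFun k x) (Ici 1) := by
  intro k hk l _ hkl
  simp only [hFun_eq]
  have h_pow := Real.rpow_lt_rpow (pow_nonneg (one_sub_inv_natCast_nonneg k) k)
    (strictMonoOn_one_sub_inv_pow hk (le_trans hk hkl.le) hkl) (by linarith [hx.2] : 0 < 1 - x)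
  have hg : 0 < 3 * x - 2 * x ^ 2 := by nlinarith [hx.1, hx.2]
  linarith [mul_lt_mul_of_pos_left h_pow hg]

lemma hFun_twenty_lt : hFun 20 0.42 < 1 / 2 := by
  have h_exp : ((1 : ℝ) - 0.42) * ((20 : ℕ) : ℝ) = 58 / 5 := by norm_num
  have h_base : (1 : ℝ) - 1 / ((20 : ℕ) : ℝ) = 19 / 20 := by norm_num
  have h_fifth : ((19 / 20 : ℝ) ^ ((58 : ℝ) / 5)) ^ (5 : ℕ) = (19 / 20 : ℝ) ^ (58 : ℕ) := by
    rw [← Real.rpow_natCast _ 5, ← Real.rpow_mul (by norm_num)]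
    norm_num
  -- `625/1134 = 1 / (2 g(0.42))`, so this is exactly the bound needed.
  have h_lower : (625 / 1134 : ℝ) < (19 / 20 : ℝ) ^ ((58 : ℝ) / 5) := by
    refine lt_of_pow_lt_pow_left₀ 5 (Real.rpow_nonneg (by norm_num) _) ?_
    rw [h_fifth]
    norm_num
  rw [hFun, h_exp, h_base]
  linarith

/-- For every integer `k ≥ 2`, `h(k,·)` is decreasing in `x` on `(1/4, 1/2)`; for every fixed
`x ∈ (1/4, 1/2)`, `h(·,x)` is decreasing in the integer `k ≥ 2`; and `h(20, 0.42) < 1/2`. -/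
theorem stmt_14 :
    (∀ k : ℕ, 2 ≤ k → ∀ x ∈ Set.Ioo (1 / 4 : ℝ) (1 / 2), ∀ y ∈ Set.Ioo (1 / 4 : ℝ) (1 / 2),
      x < y → hFun k y < hFun k x) ∧
    (∀ x ∈ Set.Ioo (1 / 4 : ℝ) (1 / 2), ∀ k l : ℕ, 2 ≤ k → k < l → hFun l x < hFun k x) ∧
    hFun 20 0.42 < 1 / 2 := by
  have h_sub : Ioo (1 / 4 : ℝ) (1 / 2) ⊆ Icc 0 (3 / 4) :=
    Ioo_subset_Icc_self.trans (Icc_subset_Icc (by norm_num) (by norm_num))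
  refine ⟨fun k hk x hx y hy hxy => ?_, fun x hx k l hk hkl => ?_, hFun_twenty_lt⟩
  · exact hFun_strictAntiOn hk (h_sub hx) (h_sub hy) hxy
  · have hx' : x ∈ Ioo (0 : ℝ) 1 := ⟨by linarith [hx.1], by linarith [hx.2]⟩
    exact hFun_index_strictAntiOn hx' (by omega : 1 ≤ k) (by omega : 1 ≤ l) hkl
end
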